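/- arXiv:1503.00995 — 4 statements merged into one kernel-verified Lean document; each statement's English description precedes it below -/
import Mathlib

section
/- Let s₁ + s₂ ≥ 0 with s₁ ≤ 0 ≤ s₂, and let u ∈ H^{s₁}(ℝᵈ), v ∈ H^{s₂}(ℝᵈ) both compactly supported, and φ ∈ C_c^∞(ℝᵈ). Then the convolution integral ∫ |û φ(ξ−η)| |v̂ φ(η)| dη converges absolutely for every ξ, and the Fourier transform of uvφ² satisfies |FT(uvφ²)(ξ)| ≤ (1+|ξ|)^{−s₁} ‖uφ‖_{H^{s₁}} ‖vφ‖_{H^{s₂}}. -/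
open MeasureTheory Real
open scoped FourierTransform

/-- The `H^s` Sobolev norm `‖(1+|ξ|)^s û(ξ)‖_{L²}` of a function on `ℝᵈ`. -/
noncomputable def hsNorm {d : ℕ} (s : ℝ) (u : EuclideanSpace ℝ (Fin d) → ℂ) : ℝ :=
  (∫ ξ : EuclideanSpace ℝ (Fin d), ((1 + ‖ξ‖) ^ s * ‖𝓕 u ξ‖) ^ 2) ^ (1/2 : ℝ)

open scoped RealInnerProductSpace ENNReal

section Aux

/-- Peetre-type weight estimate. -/
private lemma weight_bound {s₁ s₂ : ℝ} (hs₁ : s₁ ≤ 0) (hsum : 0 ≤ s₁ + s₂)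
    {a b c : ℝ} (ha : 0 ≤ a) (hb : 0 ≤ b) (hc : 0 ≤ c) (hcab : c ≤ a + b) :
    (1 + c) ^ (-s₁) * (1 + b) ^ (-s₂) ≤ (1 + a) ^ (-s₁) := by
  have h1 : (1 + c) ≤ (1 + a) * (1 + b) := by nlinarith
  have h2 : (1 + c) ^ (-s₁) ≤ ((1 + a) * (1 + b)) ^ (-s₁) :=
    Real.rpow_le_rpow (by positivity) h1 (by linarith)
  rw [Real.mul_rpow (by positivity) (by positivity)] at h2
  calc (1 + c) ^ (-s₁) * (1 + b) ^ (-s₂)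
      ≤ (1 + a) ^ (-s₁) * (1 + b) ^ (-s₁) * (1 + b) ^ (-s₂) :=
        mul_le_mul_of_nonneg_right h2 (Real.rpow_nonneg (by positivity) _)
    _ = (1 + a) ^ (-s₁) * (1 + b) ^ (-(s₁ + s₂)) := by
        rw [mul_assoc, ← Real.rpow_add (by positivity)]
        ring_nf
    _ ≤ (1 + a) ^ (-s₁) * 1 :=
        mul_le_mul_of_nonneg_left
          (Real.rpow_le_one_of_one_le_of_nonpos (by linarith) (by linarith))
          (Real.rpow_nonneg (by positivity) _)
    _ = (1 + a) ^ (-s₁) := mul_one _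

/-- The product of two `L²` functions is integrable. -/
private lemma l2_mul_l2_integrable {α : Type*} [MeasurableSpace α] {μ : Measure α}
    {𝕜 : Type*} [RCLike 𝕜] {a b : α → 𝕜} (ha : MemLp a 2 μ) (hb : MemLp b 2 μ) :
    Integrable (fun x => a x * b x) μ := by
  have hpqr : (1 : ℝ≥0∞) / 1 = 1 / 2 + 1 / 2 := by
    rw [ENNReal.div_add_div_same, one_add_one_eq_two,
      ENNReal.div_self (by norm_num) ENNReal.ofNat_ne_top]
    norm_num
  have h : MemLp (a • b) 1 μ := hb.smul ha
  rw [← memLp_one_iff_integrable]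
  exact h

private lemma conj_two_two : Real.HolderConjugate 2 2 := by constructor <;> norm_num

private lemma ofReal_two : ENNReal.ofReal (2 : ℝ) = 2 := by norm_num

end Aux

set_option maxHeartbeats 2000000 in
/-- **Sobolev product estimate.** For `s₁ ≤ 0 ≤ s₂`, `s₁ + s₂ ≥ 0`, compactly supported
`u ∈ H^{s₁}`, `v ∈ H^{s₂}` and a test function `φ`, the convolution integral
`∫ |𝓕(uφ)(ξ−η)| |𝓕(vφ)(η)| dη` converges absolutely for every `ξ` and
`|𝓕(uvφ²)(ξ)| ≤ ∫ |𝓕(uφ)(ξ−η)||𝓕(vφ)(η)| dη ≤ (1+|ξ|)^{−s₁} ‖uφ‖_{H^{s₁}} ‖vφ‖_{H^{s₂}}`. -/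
theorem sobolev_product_estimate {d : ℕ} (s₁ s₂ : ℝ)
    (hs₁ : s₁ ≤ 0) (hs₂ : 0 ≤ s₂) (hsum : 0 ≤ s₁ + s₂)
    (u v φ : EuclideanSpace ℝ (Fin d) → ℂ)
    (hu : Measurable u) (hv : Measurable v)
    (huc : HasCompactSupport u) (hvc : HasCompactSupport v)
    (hφ : ContDiff ℝ (⊤ : ℕ∞) φ) (hφc : HasCompactSupport φ)
    (huφ1 : Integrable (fun x => u x * φ x)) (hvφ1 : Integrable (fun x => v x * φ x))
    (huφ2 : MemLp (fun x => u x * φ x) 2) (hvφ2 : MemLp (fun x => v x * φ x) 2)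
    (huvφ : Integrable (fun x => u x * v x * φ x ^ 2))
    (huH : MemLp (fun ξ : EuclideanSpace ℝ (Fin d) =>
      (1 + ‖ξ‖) ^ s₁ * ‖𝓕 (fun x => u x * φ x) ξ‖) 2)
    (hvH : MemLp (fun ξ : EuclideanSpace ℝ (Fin d) =>
      (1 + ‖ξ‖) ^ s₂ * ‖𝓕 (fun x => v x * φ x) ξ‖) 2) :
    (∀ ξ : EuclideanSpace ℝ (Fin d),
      Integrable (fun η : EuclideanSpace ℝ (Fin d) =>
        ‖𝓕 (fun x => u x * φ x) (ξ - η)‖ * ‖𝓕 (fun x => v x * φ x) η‖)) ∧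
    (∀ ξ : EuclideanSpace ℝ (Fin d),
      ‖𝓕 (fun x => u x * v x * φ x ^ 2) ξ‖ ≤
        ∫ η : EuclideanSpace ℝ (Fin d),
          ‖𝓕 (fun x => u x * φ x) (ξ - η)‖ * ‖𝓕 (fun x => v x * φ x) η‖) ∧
    (∀ ξ : EuclideanSpace ℝ (Fin d),
      (∫ η : EuclideanSpace ℝ (Fin d),
          ‖𝓕 (fun x => u x * φ x) (ξ - η)‖ * ‖𝓕 (fun x => v x * φ x) η‖) ≤
        (1 + ‖ξ‖) ^ (-s₁) * hsNorm s₁ (fun x => u x * φ x) *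
          hsNorm s₂ (fun x => v x * φ x)) := by
  set f : EuclideanSpace ℝ (Fin d) → ℂ := fun x => u x * φ x with hfdef
  set g : EuclideanSpace ℝ (Fin d) → ℂ := fun x => v x * φ x with hgdef
  have hfm : Measurable f := hu.mul hφ.continuous.measurable
  have hgm : Measurable g := hv.mul hφ.continuous.measurable
  have hFf : Continuous (𝓕 f) :=
    VectorFourier.fourierIntegral_continuous Real.continuous_fourierChar
      (by exact continuous_inner) huφ1
  have hFg : Continuous (𝓕 g) :=
    VectorFourier.fourierIntegral_continuous Real.continuous_fourierChar
      (by exact continuous_inner) hvφ1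
  set A : EuclideanSpace ℝ (Fin d) → ℝ := fun ζ => (1 + ‖ζ‖) ^ s₁ * ‖𝓕 f ζ‖ with hAdef
  set B : EuclideanSpace ℝ (Fin d) → ℝ := fun ζ => (1 + ‖ζ‖) ^ s₂ * ‖𝓕 g ζ‖ with hBdef
  have hA0 : ∀ ζ, 0 ≤ A ζ := fun ζ => by
    simp only [hAdef]; positivity
  have hB0 : ∀ ζ, 0 ≤ B ζ := fun ζ => by
    simp only [hBdef]; positivity
  have hdecF : ∀ ζ : EuclideanSpace ℝ (Fin d), ‖𝓕 f ζ‖ = (1 + ‖ζ‖) ^ (-s₁) * A ζ := by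
    intro ζ
    simp only [hAdef]
    rw [← mul_assoc, ← Real.rpow_add (by positivity), neg_add_cancel, Real.rpow_zero, one_mul]
  have hdecG : ∀ ζ : EuclideanSpace ℝ (Fin d), ‖𝓕 g ζ‖ = (1 + ‖ζ‖) ^ (-s₂) * B ζ := by
    intro ζ
    simp only [hBdef]
    rw [← mul_assoc, ← Real.rpow_add (by positivity), neg_add_cancel, Real.rpow_zero, one_mul]
  -- pointwise bound
  have hbd : ∀ ξ η : EuclideanSpace ℝ (Fin d), ‖𝓕 f (ξ - η)‖ * ‖𝓕 g η‖ ≤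
      (1 + ‖ξ‖) ^ (-s₁) * (A (ξ - η) * B η) := by
    intro ξ η
    calc ‖𝓕 f (ξ - η)‖ * ‖𝓕 g η‖
        = ((1 + ‖ξ - η‖) ^ (-s₁) * (1 + ‖η‖) ^ (-s₂)) * (A (ξ - η) * B η) := by
          rw [hdecF, hdecG]; ring
      _ ≤ (1 + ‖ξ‖) ^ (-s₁) * (A (ξ - η) * B η) := by
          refine mul_le_mul_of_nonneg_right ?_ (mul_nonneg (hA0 _) (hB0 _))
          exact weight_bound hs₁ hsum (norm_nonneg ξ) (norm_nonneg η) (norm_nonneg _)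
            (norm_sub_le ξ η)
  have hA' : ∀ ξ : EuclideanSpace ℝ (Fin d), MemLp (fun η => A (ξ - η)) 2 (volume : Measure (EuclideanSpace ℝ (Fin d))) := fun ξ =>
    MemLp.comp_measurePreserving (f := fun η : EuclideanSpace ℝ (Fin d) => ξ - η) huH
      (Measure.measurePreserving_sub_left volume ξ)
  have hAB : ∀ ξ : EuclideanSpace ℝ (Fin d), Integrable (fun η => A (ξ - η) * B η) (volume : Measure (EuclideanSpace ℝ (Fin d))) := fun ξ =>
    l2_mul_l2_integrable (𝕜 := ℝ) (hA' ξ) hvH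
  have htm : ∀ ξ : EuclideanSpace ℝ (Fin d), AEStronglyMeasurable
      (fun η : EuclideanSpace ℝ (Fin d) => ‖𝓕 f (ξ - η)‖ * ‖𝓕 g η‖) (volume : Measure (EuclideanSpace ℝ (Fin d))) := fun ξ =>
    (((hFf.comp (continuous_const.sub continuous_id)).norm).mul hFg.norm).aestronglyMeasurable
  -- part 1
  have part1 : ∀ ξ : EuclideanSpace ℝ (Fin d), Integrable (fun η : EuclideanSpace ℝ (Fin d) => ‖𝓕 f (ξ - η)‖ * ‖𝓕 g η‖) := by
    intro ξ
    refine Integrable.mono' ((hAB ξ).const_mul ((1 + ‖ξ‖) ^ (-s₁))) (htm ξ)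
      (Filter.Eventually.of_forall fun η => ?_)
    rw [Real.norm_of_nonneg (by positivity)]
    exact hbd ξ η
  -- part 3
  have part3 : ∀ ξ : EuclideanSpace ℝ (Fin d),
      (∫ η : EuclideanSpace ℝ (Fin d), ‖𝓕 f (ξ - η)‖ * ‖𝓕 g η‖) ≤
        (1 + ‖ξ‖) ^ (-s₁) * hsNorm s₁ f * hsNorm s₂ g := by
    intro ξ
    have hAint : ∫ η : EuclideanSpace ℝ (Fin d), A (ξ - η) ^ (2:ℝ) = ∫ ζ : EuclideanSpace ℝ (Fin d), A ζ ^ (2:ℝ) :=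
      integral_sub_left_eq_self (fun ζ => A ζ ^ (2:ℝ)) volume ξ
    have hrw1 : (fun ζ : EuclideanSpace ℝ (Fin d) => A ζ ^ (2:ℝ)) =
        fun ζ : EuclideanSpace ℝ (Fin d) => ((1 + ‖ζ‖) ^ s₁ * ‖𝓕 f ζ‖) ^ 2 := by
      funext ζ; rw [Real.rpow_two]
    have hHs1 : (∫ η : EuclideanSpace ℝ (Fin d), A (ξ - η) ^ (2:ℝ)) ^ (1/2 : ℝ) = hsNorm s₁ f := by
      rw [hAint, show hsNorm s₁ f = (∫ ζ : EuclideanSpace ℝ (Fin d),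
        ((1 + ‖ζ‖) ^ s₁ * ‖𝓕 f ζ‖) ^ 2) ^ (1/2 : ℝ) from rfl, ← hrw1]
    have hrw2 : (fun ζ : EuclideanSpace ℝ (Fin d) => B ζ ^ (2:ℝ)) =
        fun ζ : EuclideanSpace ℝ (Fin d) => ((1 + ‖ζ‖) ^ s₂ * ‖𝓕 g ζ‖) ^ 2 := by
      funext ζ; rw [Real.rpow_two]
    have hHs2 : (∫ η : EuclideanSpace ℝ (Fin d), B η ^ (2:ℝ)) ^ (1/2 : ℝ) = hsNorm s₂ g := by
      rw [show hsNorm s₂ g = (∫ ζ : EuclideanSpace ℝ (Fin d),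
        ((1 + ‖ζ‖) ^ s₂ * ‖𝓕 g ζ‖) ^ 2) ^ (1/2 : ℝ) from rfl, ← hrw2]
    calc (∫ η : EuclideanSpace ℝ (Fin d), ‖𝓕 f (ξ - η)‖ * ‖𝓕 g η‖)
        ≤ ∫ η : EuclideanSpace ℝ (Fin d), (1 + ‖ξ‖) ^ (-s₁) * (A (ξ - η) * B η) :=
          integral_mono (part1 ξ) ((hAB ξ).const_mul _) (fun η => hbd ξ η)
      _ = (1 + ‖ξ‖) ^ (-s₁) * ∫ η : EuclideanSpace ℝ (Fin d), A (ξ - η) * B η := integral_const_mul _ _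
      _ ≤ (1 + ‖ξ‖) ^ (-s₁) *
            ((∫ η : EuclideanSpace ℝ (Fin d), A (ξ - η) ^ (2:ℝ)) ^ (1/2 : ℝ) * (∫ η : EuclideanSpace ℝ (Fin d), B η ^ (2:ℝ)) ^ (1/2 : ℝ)) := by
          refine mul_le_mul_of_nonneg_left ?_ (Real.rpow_nonneg (by positivity) _)
          have hA2 : MemLp (fun η => A (ξ - η)) (ENNReal.ofReal 2)
              (volume : Measure (EuclideanSpace ℝ (Fin d))) := by
            rw [ofReal_two]; exact hA' ξ
          have hB2 : MemLp B (ENNReal.ofReal 2)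
              (volume : Measure (EuclideanSpace ℝ (Fin d))) := by
            rw [ofReal_two]; exact hvH
          have := integral_mul_le_Lp_mul_Lq_of_nonneg conj_two_two
            (Filter.Eventually.of_forall fun η => hA0 (ξ - η))
            (Filter.Eventually.of_forall fun η => hB0 η)
            hA2 hB2
          simpa using this
      _ = (1 + ‖ξ‖) ^ (-s₁) * hsNorm s₁ f * hsNorm s₂ g := by
          rw [hHs1, hHs2]; ring
  -- part 2
  have part2 : ∀ ξ : EuclideanSpace ℝ (Fin d), ‖𝓕 (fun x => u x * v x * φ x ^ 2) ξ‖ ≤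
      ∫ η : EuclideanSpace ℝ (Fin d), ‖𝓕 f (ξ - η)‖ * ‖𝓕 g η‖ := by
    intro ξ
    -- the modulated character
    set e : EuclideanSpace ℝ (Fin d) → EuclideanSpace ℝ (Fin d) → ℂ :=
      fun x w => Complex.exp (((-2 * π * ⟪x, w⟫ : ℝ) : ℂ) * Complex.I) with hedef
    have hFT : ∀ (q : EuclideanSpace ℝ (Fin d) → ℂ) (w : EuclideanSpace ℝ (Fin d)),
        𝓕 q w = ∫ x, e x w * q x := by
      intro q w
      rw [Real.fourier_eq']
      simp only [hedef, smul_eq_mul]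
    have he_norm : ∀ x w : EuclideanSpace ℝ (Fin d), ‖e x w‖ = 1 := by
      intro x w
      simp only [hedef, Complex.norm_exp_ofReal_mul_I]
    have he_cont : ∀ w : EuclideanSpace ℝ (Fin d), Continuous fun x => e x w := by
      intro w
      simp only [hedef]
      exact Complex.continuous_exp.comp ((Complex.continuous_ofReal.comp
        (continuous_const.mul (continuous_id.inner continuous_const))).mul continuous_const)
    have he_add : ∀ x y w : EuclideanSpace ℝ (Fin d), e (x + y) w = e x w * e y w := by
      intro x y w
      simp only [hedef]
      rw [← Complex.exp_add]
      congr 1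
      rw [inner_add_left]
      push_cast
      ring
    -- the reflected modulated function F
    set F : EuclideanSpace ℝ (Fin d) → ℂ := fun w => e (-w) ξ * f (-w) with hFdef
    have hFnorm : ∀ w, ‖F w‖ = ‖f (-w)‖ := by
      intro w
      simp only [hFdef]
      rw [norm_mul, he_norm, one_mul]
    have hFmeas : AEStronglyMeasurable F volume := by
      have : Measurable F := (((he_cont ξ).comp continuous_neg).measurable).mul
        (hfm.comp measurable_neg)
      exact this.aestronglyMeasurable
    have hF1 : Integrable F volume := by
      have := Integrable.bdd_mul (Integrable.comp_neg huφ1)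
        (((he_cont ξ).comp continuous_neg).aestronglyMeasurable)
        (Filter.Eventually.of_forall fun w => le_of_eq (he_norm _ _))
      exact this
    have hF2 : MemLp F 2 volume := by
      have h1 : MemLp (fun w : EuclideanSpace ℝ (Fin d) => f (-w)) 2 volume :=
        MemLp.comp_measurePreserving (f := fun w : EuclideanSpace ℝ (Fin d) => -w) huφ2
          (Measure.measurePreserving_neg volume)
      exact MemLp.of_le h1 hFmeas (Filter.Eventually.of_forall fun w => le_of_eq (hFnorm w))
    set L : ℂ →L[ℂ] ℂ →L[ℂ] ℂ := ContinuousLinearMap.mul ℂ ℂ with hLdef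
    set h : EuclideanSpace ℝ (Fin d) → ℂ := convolution g F L volume with hhdef
    have hconv_def : ∀ z, h z = ∫ t, g t * F (z - t) := by
      intro z
      rw [hhdef, convolution_def]
      simp only [hLdef, ContinuousLinearMap.mul_apply']
    have hh1 : Integrable h volume := hvφ1.integrable_convolution L hF1
    have hh0 : h 0 = 𝓕 (fun x => f x * g x) ξ := by
      rw [hconv_def, hFT]
      refine integral_congr_ae (Filter.Eventually.of_forall fun t => ?_)
      show g t * F (0 - t) = e t ξ * (f t * g t)
      simp only [hFdef, zero_sub, neg_neg]
      ring
    have hCE2 : ∀ (q : EuclideanSpace ℝ (Fin d) → ℂ), MemLp q 2 volume →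
        ∀ z : EuclideanSpace ℝ (Fin d), Integrable (fun t => g t * q (z - t)) volume := by
      intro q hq z
      exact l2_mul_l2_integrable (𝕜 := ℂ) hvφ2
        (MemLp.comp_measurePreserving (f := fun t : EuclideanSpace ℝ (Fin d) => z - t) hq
          (Measure.measurePreserving_sub_left volume z))
    have hFF : ∀ η : EuclideanSpace ℝ (Fin d), (∫ w, e w η * F w) = 𝓕 f (ξ - η) := by
      intro η
      have hsub : ∀ w : EuclideanSpace ℝ (Fin d), e (-w) η * F (-w) = e w (ξ - η) * f w := by
        intro w
        simp only [hFdef, neg_neg, hedef]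
        rw [← mul_assoc, ← Complex.exp_add]
        congr 2
        rw [inner_neg_left, inner_sub_right]
        push_cast
        ring
      calc (∫ w, e w η * F w) = ∫ w, e (-w) η * F (-w) :=
            (integral_neg_eq_self (fun w => e w η * F w) volume).symm
        _ = ∫ w, e w (ξ - η) * f w :=
            integral_congr_ae (Filter.Eventually.of_forall fun w => hsub w)
        _ = 𝓕 f (ξ - η) := (hFT f (ξ - η)).symm
    have hkey : ∀ η : EuclideanSpace ℝ (Fin d), 𝓕 h η = 𝓕 f (ξ - η) * 𝓕 g η := by
      intro η
      have base : Integrable (fun p : EuclideanSpace ℝ (Fin d) × EuclideanSpace ℝ (Fin d) =>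
          g p.2 * F (p.1 - p.2)) ((volume : Measure (EuclideanSpace ℝ (Fin d))).prod volume) := by
        have := hvφ1.convolution_integrand L hF1
        simpa only [hLdef, ContinuousLinearMap.mul_apply'] using this
      have hprod : Integrable (Function.uncurry fun z t =>
          e z η * (g t * F (z - t)))
          ((volume : Measure (EuclideanSpace ℝ (Fin d))).prod volume) := by
        have : Integrable (fun p : EuclideanSpace ℝ (Fin d) × EuclideanSpace ℝ (Fin d) =>
            e p.1 η * (g p.2 * F (p.1 - p.2)))
            ((volume : Measure (EuclideanSpace ℝ (Fin d))).prod volume) :=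
          base.bdd_mul (((he_cont η).comp continuous_fst).aestronglyMeasurable)
            (Filter.Eventually.of_forall fun p => le_of_eq (he_norm _ _))
        exact this
      calc 𝓕 h η = ∫ z, e z η * h z := hFT h η
        _ = ∫ z, ∫ t, e z η * (g t * F (z - t)) := by
            refine integral_congr_ae (Filter.Eventually.of_forall fun z => ?_)
            show e z η * h z = ∫ t, e z η * (g t * F (z - t))
            rw [hconv_def z]
            exact (integral_const_mul _ _).symm
        _ = ∫ t, ∫ z, e z η * (g t * F (z - t)) :=
            integral_integral_swap (f := fun z t => e z η * (g t * F (z - t))) hprod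
        _ = ∫ t, (e t η * g t) * 𝓕 f (ξ - η) := by
            refine integral_congr_ae (Filter.Eventually.of_forall fun t => ?_)
            show (∫ z, e z η * (g t * F (z - t))) = (e t η * g t) * 𝓕 f (ξ - η)
            calc ∫ z, e z η * (g t * F (z - t))
                = ∫ w, e (t + w) η * (g t * F ((t + w) - t)) :=
                  (integral_add_left_eq_self
                    (fun z => e z η * (g t * F (z - t))) t).symm
              _ = ∫ w, (e t η * g t) * (e w η * F w) := by
                  refine integral_congr_ae (Filter.Eventually.of_forall fun w => ?_)
                  show e (t + w) η * (g t * F ((t + w) - t)) = (e t η * g t) * (e w η * F w)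
                  rw [add_sub_cancel_left, he_add]
                  ring
              _ = (e t η * g t) * ∫ w, e w η * F w := integral_const_mul _ _
              _ = (e t η * g t) * 𝓕 f (ξ - η) := by rw [hFF]
        _ = (∫ t, e t η * g t) * 𝓕 f (ξ - η) := integral_mul_const _ _
        _ = 𝓕 f (ξ - η) * 𝓕 g η := by
            rw [← hFT g η]
            ring
    have hP : Integrable (fun η => 𝓕 f (ξ - η) * 𝓕 g η) volume := by
      refine Integrable.mono' (part1 ξ)
        (((hFf.comp (continuous_const.sub continuous_id)).mul hFg).aestronglyMeasurable)
        (Filter.Eventually.of_forall fun η => ?_)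
      rw [norm_mul]
    have h𝓕h : Integrable (𝓕 h) volume := by
      have : 𝓕 h = fun η => 𝓕 f (ξ - η) * 𝓕 g η := funext hkey
      rw [this]
      exact hP
    -- continuity of h at 0
    set Cg : ℝ := (∫ t : EuclideanSpace ℝ (Fin d), ‖g t‖ ^ (2:ℝ)) ^ (1/2:ℝ) with hCgdef
    have hCg : (0:ℝ) ≤ Cg := by
      rw [hCgdef]; positivity
    have hg2' : MemLp g (ENNReal.ofReal 2) volume := by rw [ofReal_two]; exact hvφ2
    have hdiff : ∀ (q : EuclideanSpace ℝ (Fin d) → ℂ), MemLp q 2 volume →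
        ∀ z, ‖h z - (convolution g q L volume) z‖ ≤
          Cg * (∫ t, ‖F t - q t‖ ^ (2:ℝ)) ^ (1/2:ℝ) := by
      intro q hq2 z
      have h1 := hCE2 F hF2 z
      have h2 := hCE2 q hq2 z
      have hqz : MemLp (fun t => F (z - t) - q (z - t)) (ENNReal.ofReal 2) volume := by
        rw [ofReal_two]
        exact MemLp.comp_measurePreserving
          (f := fun t : EuclideanSpace ℝ (Fin d) => z - t) (hF2.sub hq2)
          (Measure.measurePreserving_sub_left volume z)
      have heq : h z - (convolution g q L volume) z = ∫ t, g t * (F (z - t) - q (z - t)) := by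
        rw [hconv_def, convolution_def]
        simp only [hLdef, ContinuousLinearMap.mul_apply']
        rw [← integral_sub h1 h2]
        refine integral_congr_ae (Filter.Eventually.of_forall fun t => ?_)
        ring
      rw [heq]
      calc ‖∫ t, g t * (F (z - t) - q (z - t))‖
          ≤ ∫ t, ‖g t‖ * ‖F (z - t) - q (z - t)‖ := by
            refine (norm_integral_le_integral_norm _).trans_eq ?_
            refine integral_congr_ae (Filter.Eventually.of_forall fun t => ?_)
            show ‖g t * (F (z - t) - q (z - t))‖ = ‖g t‖ * ‖F (z - t) - q (z - t)‖
            rw [norm_mul]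
        _ ≤ (∫ t, ‖g t‖ ^ (2:ℝ)) ^ (1/2:ℝ) *
              (∫ t, ‖F (z - t) - q (z - t)‖ ^ (2:ℝ)) ^ (1/2:ℝ) := by
            have := integral_mul_norm_le_Lp_mul_Lq conj_two_two hg2' hqz
            simpa using this
        _ = Cg * (∫ t, ‖F t - q t‖ ^ (2:ℝ)) ^ (1/2:ℝ) := by
            rw [hCgdef]
            congr 2
            exact integral_sub_left_eq_self
              (fun t => ‖F t - q t‖ ^ (2:ℝ)) volume z
    have hcont : ContinuousAt h 0 := by
      rw [Metric.continuousAt_iff]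
      intro ε hε
      have hε₀ : (0:ℝ) < ε / (4 * (Cg + 1)) := by positivity
      obtain ⟨q, hqc, hqnorm, hqcont, hq2⟩ :=
        hF2.exists_hasCompactSupport_eLpNorm_sub_le (p := 2) ENNReal.ofNat_ne_top
          (ε := ENNReal.ofReal (ε / (4 * (Cg + 1))))
          (by simpa [ENNReal.ofReal_eq_zero, not_le] using hε₀)
      have hFq2 : MemLp (F - q) 2 volume := hF2.sub hq2
      have hRle : (∫ t, ‖F t - q t‖ ^ (2:ℝ)) ^ (1/2:ℝ) ≤ ε / (4 * (Cg + 1)) := by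
        have hel := hFq2.eLpNorm_eq_integral_rpow_norm (by norm_num) ENNReal.ofNat_ne_top
        rw [hel] at hqnorm
        have h2t : ((2:ℝ≥0∞)).toReal = (2:ℝ) := by norm_num
        rw [h2t] at hqnorm
        have hre := (ENNReal.ofReal_le_ofReal_iff hε₀.le).mp hqnorm
        calc (∫ t, ‖F t - q t‖ ^ (2:ℝ)) ^ (1/2:ℝ)
            = (∫ t, ‖(F - q) t‖ ^ (2:ℝ)) ^ ((2:ℝ))⁻¹ := by
              rw [show (1/2 : ℝ) = ((2:ℝ))⁻¹ by norm_num]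
              rfl
          _ ≤ ε / (4 * (Cg + 1)) := hre
      have hbound : ∀ z, ‖h z - (convolution g q L volume) z‖ ≤ Cg * (ε / (4 * (Cg + 1))) :=
        fun z => (hdiff q hq2 z).trans (mul_le_mul_of_nonneg_left hRle hCg)
      have hCgb : Cg * (ε / (4 * (Cg + 1))) ≤ ε / 4 := by
        have heq : Cg * (ε / (4 * (Cg + 1))) = (Cg * ε) / (4 * (Cg + 1)) := by ring
        rw [heq, div_le_div_iff₀ (by positivity) (by norm_num)]
        nlinarith [hCg, hε.le]
      have hqct : Continuous (convolution g q L volume) :=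
        hqc.continuous_convolution_right L hvφ1.locallyIntegrable hqcont
      have hct0 := hqct.continuousAt (x := 0)
      rw [Metric.continuousAt_iff] at hct0
      obtain ⟨δ, hδ, hδ'⟩ := hct0 (ε/8) (by positivity)
      refine ⟨δ, hδ, fun z hz => ?_⟩
      have h1 := hbound z
      have h2 : ‖convolution g q L volume 0 - h 0‖ ≤ Cg * (ε / (4 * (Cg + 1))) := by
        rw [norm_sub_rev]
        exact hbound 0
      have h3 : dist (convolution g q L volume z) (convolution g q L volume 0) < ε/8 := hδ' hz
      have h4 : dist (h z) (h 0) ≤ ‖h z - convolution g q L volume z‖ +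
          dist (convolution g q L volume z) (convolution g q L volume 0) +
          ‖convolution g q L volume 0 - h 0‖ := by
        have := dist_triangle4 (h z) (convolution g q L volume z)
          (convolution g q L volume 0) (h 0)
        simpa [dist_eq_norm] using this
      have h5 : dist (h z) (h 0) ≤ ε/4 + ε/8 + ε/4 := by
        have := h3.le
        linarith [h1.trans hCgb, h2.trans hCgb]
      linarith
    have hinv := hh1.fourierInv_fourier_eq h𝓕h hcont
    have hinv0 : 𝓕⁻ (𝓕 h) 0 = ∫ η, 𝓕 h η := by
      rw [Real.fourierInv_eq]
      refine integral_congr_ae (Filter.Eventually.of_forall fun η => ?_)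
      simp
    have hmain : (∫ η, 𝓕 f (ξ - η) * 𝓕 g η) = 𝓕 (fun x => f x * g x) ξ := by
      rw [← hh0, ← hinv, hinv0]
      exact integral_congr_ae (Filter.Eventually.of_forall fun η => (hkey η).symm)
    have huv : 𝓕 (fun x => u x * v x * φ x ^ 2) ξ = 𝓕 (fun x => f x * g x) ξ := by
      refine congrArg (fun q : EuclideanSpace ℝ (Fin d) → ℂ => 𝓕 q ξ) ?_
      funext x
      simp only [hfdef, hgdef]
      ring
    rw [huv, ← hmain]
    calc ‖∫ η, 𝓕 f (ξ - η) * 𝓕 g η‖ ≤ ∫ η, ‖𝓕 f (ξ - η) * 𝓕 g η‖ :=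
          norm_integral_le_integral_norm _
      _ = ∫ η, ‖𝓕 f (ξ - η)‖ * ‖𝓕 g η‖ :=
          integral_congr_ae (Filter.Eventually.of_forall fun η => norm_mul _ _)
  exact ⟨part1, part2, part3⟩
end

section
/- Let Γ₁, Γ₂ be closed conic subsets of T*ℝᵈ ∖ 0 with Γ₁ ∩ (−Γ₂) = ∅. Then the Iagolnitzer sum Γ₁ +̂ᵢ Γ₂ := {(x,ξ) : ξ ≠ 0 and there exist sequences (x₁ₙ, ξ₁ₙ) ∈ Γ₁, (x₂ₙ, ξ₂ₙ) ∈ Γ₂ with x₁ₙ → x, x₂ₙ → x, ξ₁ₙ + ξ₂ₙ → ξ} equals (Γ₁ + Γ₂) ∪ Γ₁ ∪ Γ₂, where Γ₁ + Γ₂ = {(x, ξ₁+ξ₂) : (x,ξ₁) ∈ Γ₁, (x,ξ₂) ∈ Γ₂, ξ₁+ξ₂ ≠ 0}. -/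
open Filter Topology

/-- The zero section `{(x, 0)}` of `ℝᵈ × ℝᵈ`. -/
def zeroSection (d : ℕ) : Set ((Fin d → ℝ) × (Fin d → ℝ)) := {p | p.2 = 0}

/-- The Iagolnitzer sum `Γ₁ +̂ᵢ Γ₂`: points `(x, ξ)` with `ξ ≠ 0` which are limits of
sums of covectors of `Γ₁` and `Γ₂` (with the zero section adjoined) over base points
converging to `x`. -/
def iagolnitzerSum {d : ℕ} (Γ₁ Γ₂ : Set ((Fin d → ℝ) × (Fin d → ℝ))) :
    Set ((Fin d → ℝ) × (Fin d → ℝ)) :=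
  {p | p.2 ≠ 0 ∧ ∃ x₁ x₂ ξ₁ ξ₂ : ℕ → (Fin d → ℝ),
    (∀ m, (x₁ m, ξ₁ m) ∈ Γ₁ ∪ zeroSection d) ∧
    (∀ m, (x₂ m, ξ₂ m) ∈ Γ₂ ∪ zeroSection d) ∧
    Tendsto x₁ atTop (𝓝 p.1) ∧ Tendsto x₂ atTop (𝓝 p.1) ∧
    Tendsto (fun m => ξ₁ m + ξ₂ m) atTop (𝓝 p.2)}

/-- **The Iagolnitzer sum of transverse closed cones.** If `Γ₁, Γ₂` are closed conic
subsets of `T*ℝᵈ ∖ 0` with `Γ₁ ∩ (−Γ₂) = ∅`, then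
`Γ₁ +̂ᵢ Γ₂ = (Γ₁ + Γ₂) ∪ Γ₁ ∪ Γ₂` where `Γ₁ + Γ₂` is the fiberwise sum. -/
theorem iagolnitzerSum_eq_of_transverse {d : ℕ}
    (Γ₁ Γ₂ : Set ((Fin d → ℝ) × (Fin d → ℝ)))
    (h1nz : ∀ p ∈ Γ₁, p.2 ≠ 0) (h2nz : ∀ p ∈ Γ₂, p.2 ≠ 0)
    (h1cone : ∀ p ∈ Γ₁, ∀ t : ℝ, 0 < t → (p.1, t • p.2) ∈ Γ₁)
    (h2cone : ∀ p ∈ Γ₂, ∀ t : ℝ, 0 < t → (p.1, t • p.2) ∈ Γ₂)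
    (h1closed : IsClosed (Γ₁ ∪ zeroSection d))
    (h2closed : IsClosed (Γ₂ ∪ zeroSection d))
    (htrans : ∀ x ξ, (x, ξ) ∈ Γ₁ → (x, -ξ) ∉ Γ₂) :
    iagolnitzerSum Γ₁ Γ₂ =
      {p | ∃ ξ₁ ξ₂, (p.1, ξ₁) ∈ Γ₁ ∧ (p.1, ξ₂) ∈ Γ₂ ∧ ξ₁ + ξ₂ = p.2 ∧ p.2 ≠ 0}
        ∪ Γ₁ ∪ Γ₂ := by
  ext ⟨x, ξ⟩
  constructor
  · rintro ⟨hξ, x₁, x₂, ξ₁, ξ₂, hx1, hx2, hl1, hl2, hls⟩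
    simp only [ne_eq] at hξ
    by_cases hB : ∃ C, ∀ n, ‖ξ₁ n‖ ≤ C
    · -- bounded case
      obtain ⟨C, hC⟩ := hB
      have hmemball : ∀ n, ξ₁ n ∈ Metric.closedBall (0 : Fin d → ℝ) C := fun n => by
        simpa [Metric.mem_closedBall, dist_eq_norm] using hC n
      obtain ⟨η, -, φ, hφ, hφlim⟩ :=
        tendsto_subseq_of_bounded (Metric.isBounded_closedBall (x := (0 : Fin d → ℝ)) (r := C))
          hmemball
      have hφtop : Tendsto φ atTop atTop := hφ.tendsto_atTop
      have hlim2 : Tendsto (fun k => ξ₂ (φ k)) atTop (𝓝 (ξ - η)) := by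
        have := (hls.comp hφtop).sub hφlim
        simpa [Function.comp] using this
      have hm1 : (x, η) ∈ Γ₁ ∪ zeroSection d :=
        h1closed.mem_of_tendsto ((hl1.comp hφtop).prodMk_nhds hφlim)
          (Eventually.of_forall fun k => hx1 (φ k))
      have hm2 : (x, ξ - η) ∈ Γ₂ ∪ zeroSection d :=
        h2closed.mem_of_tendsto ((hl2.comp hφtop).prodMk_nhds hlim2)
          (Eventually.of_forall fun k => hx2 (φ k))
      rcases hm1 with hm1 | hm1
      · rcases hm2 with hm2 | hm2
        · exact Or.inl (Or.inl ⟨η, ξ - η, hm1, hm2, by abel, hξ⟩)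
        · have hηξ : η = ξ := by
            have : ξ - η = 0 := hm2
            have := sub_eq_zero.mp this
            exact this.symm
          exact Or.inl (Or.inr (by rwa [hηξ] at hm1))
      · have hη0 : η = 0 := hm1
        rcases hm2 with hm2 | hm2
        · refine Or.inr ?_
          rw [hη0, sub_zero] at hm2
          exact hm2
        · exact absurd (by rw [hη0, sub_zero] at hm2; exact hm2) hξ
    · -- unbounded case: contradiction with transversality
      exfalso
      push_neg at hB
      have key : ∀ k : ℕ, ∃ n, k ≤ n ∧ (k : ℝ) < ‖ξ₁ n‖ := by
        intro k
        obtain ⟨M, hM⟩ := (Set.finite_range fun i : Fin k => ‖ξ₁ i‖).bddAbove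
        obtain ⟨n, hn⟩ := hB (max M k)
        refine ⟨n, ?_, lt_of_le_of_lt (le_max_right _ _) hn⟩
        by_contra h
        push_neg at h
        exact absurd (hM ⟨⟨n, h⟩, rfl⟩)
          (not_le.mpr (lt_of_le_of_lt (le_max_left _ _) hn))
      choose ψ hψge hψlt using key
      have hψtop : Tendsto ψ atTop atTop := tendsto_atTop_mono hψge tendsto_id
      set r : ℕ → ℝ := fun k => ‖ξ₁ (ψ k)‖ with hr
      have hrpos : ∀ k, 0 < r k := fun k => lt_of_le_of_lt (Nat.cast_nonneg k) (hψlt k)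
      have hrtop : Tendsto r atTop atTop :=
        tendsto_atTop_mono (fun k => (hψlt k).le) tendsto_natCast_atTop_atTop
      set u : ℕ → (Fin d → ℝ) := fun k => (r k)⁻¹ • ξ₁ (ψ k) with hu
      have hunorm : ∀ k, ‖u k‖ = 1 := by
        intro k
        simp only [hu, norm_smul, Real.norm_eq_abs, abs_inv, abs_of_pos (hrpos k)]
        exact inv_mul_cancel₀ (hrpos k).ne'
      have humem : ∀ k, u k ∈ Metric.closedBall (0 : Fin d → ℝ) 1 := fun k => by
        simp [Metric.mem_closedBall, dist_eq_norm, hunorm k]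
      obtain ⟨η, -, φ, hφ, hφlim⟩ :=
        tendsto_subseq_of_bounded (Metric.isBounded_closedBall (x := (0 : Fin d → ℝ)) (r := 1))
          humem
      have hφtop : Tendsto φ atTop atTop := hφ.tendsto_atTop
      have hηnorm : ‖η‖ = 1 := by
        have h1 : Tendsto (fun k => ‖u (φ k)‖) atTop (𝓝 ‖η‖) := hφlim.norm
        have h2 : Tendsto (fun k => ‖u (φ k)‖) atTop (𝓝 1) := by
          simpa [hunorm] using (tendsto_const_nhds : Tendsto (fun _ : ℕ => (1:ℝ)) atTop _)
        exact tendsto_nhds_unique h1 h2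
      have hηne : η ≠ 0 := by
        intro h
        rw [h] at hηnorm
        simp at hηnorm
      have hstop : Tendsto (fun k => ψ (φ k)) atTop atTop := hψtop.comp hφtop
      have hinv0 : Tendsto (fun k => (r (φ k))⁻¹) atTop (𝓝 0) :=
        (hrtop.comp hφtop).inv_tendsto_atTop
      have hζlim : Tendsto (fun k => (r (φ k))⁻¹ • ξ₂ (ψ (φ k))) atTop (𝓝 (-η)) := by
        have hsum0 : Tendsto (fun k => (r (φ k))⁻¹ • (ξ₁ (ψ (φ k)) + ξ₂ (ψ (φ k))))
            atTop (𝓝 ((0:ℝ) • ξ)) := hinv0.smul (hls.comp hstop)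
        rw [zero_smul] at hsum0
        have hdiff := hsum0.sub hφlim
        simp only [Function.comp_def] at hdiff
        have heq : (fun k => (r (φ k))⁻¹ • (ξ₁ (ψ (φ k)) + ξ₂ (ψ (φ k))) - u (φ k))
            = fun k => (r (φ k))⁻¹ • ξ₂ (ψ (φ k)) := by
          funext k
          simp only [hu, smul_add]
          abel
        rw [heq, zero_sub] at hdiff
        exact hdiff
      have hm1seq : ∀ k, (x₁ (ψ (φ k)), u (φ k)) ∈ Γ₁ ∪ zeroSection d := by
        intro k
        rcases hx1 (ψ (φ k)) with h | h
        · exact Or.inl (h1cone _ h _ (inv_pos.mpr (hrpos (φ k))))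
        · refine Or.inr ?_
          have hz : ξ₁ (ψ (φ k)) = 0 := h
          show u (φ k) = 0
          simp [hu, hz]
      have hm2seq : ∀ k, (x₂ (ψ (φ k)), (r (φ k))⁻¹ • ξ₂ (ψ (φ k))) ∈ Γ₂ ∪ zeroSection d := by
        intro k
        rcases hx2 (ψ (φ k)) with h | h
        · exact Or.inl (h2cone _ h _ (inv_pos.mpr (hrpos (φ k))))
        · refine Or.inr ?_
          have hz : ξ₂ (ψ (φ k)) = 0 := h
          show (r (φ k))⁻¹ • ξ₂ (ψ (φ k)) = 0
          simp [hz]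
      have hmem1 : (x, η) ∈ Γ₁ ∪ zeroSection d :=
        h1closed.mem_of_tendsto ((hl1.comp hstop).prodMk_nhds hφlim)
          (Eventually.of_forall hm1seq)
      have hmem2 : (x, -η) ∈ Γ₂ ∪ zeroSection d :=
        h2closed.mem_of_tendsto ((hl2.comp hstop).prodMk_nhds hζlim)
          (Eventually.of_forall hm2seq)
      have hG1 : (x, η) ∈ Γ₁ := by
        rcases hmem1 with h | h
        · exact h
        · exact absurd h hηne
      have hG2 : (x, -η) ∈ Γ₂ := by
        rcases hmem2 with h | h
        · exact h
        · exact absurd (neg_eq_zero.mp h) hηne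
      exact htrans x η hG1 hG2
  · rintro ((⟨η₁, η₂, hη₁, hη₂, hsum, hnz⟩ | hΓ1) | hΓ2)
    · exact ⟨hnz, fun _ => x, fun _ => x, fun _ => η₁, fun _ => η₂,
        fun _ => Or.inl hη₁, fun _ => Or.inl hη₂, tendsto_const_nhds, tendsto_const_nhds,
        by simpa [hsum] using (tendsto_const_nhds : Tendsto (fun _ : ℕ => η₁ + η₂) atTop _)⟩
    · exact ⟨h1nz _ hΓ1, fun _ => x, fun _ => x, fun _ => ξ, fun _ => 0,
        fun _ => Or.inl hΓ1, fun _ => Or.inr rfl, tendsto_const_nhds, tendsto_const_nhds,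
        by simpa using (tendsto_const_nhds : Tendsto (fun _ : ℕ => ξ) atTop (𝓝 ξ))⟩
    · exact ⟨h2nz _ hΓ2, fun _ => x, fun _ => x, fun _ => 0, fun _ => ξ,
        fun _ => Or.inr rfl, fun _ => Or.inl hΓ2, tendsto_const_nhds, tendsto_const_nhds,
        by simpa using (tendsto_const_nhds : Tendsto (fun _ : ℕ => ξ) atTop (𝓝 ξ))⟩
end

section
/- On a causal manifold (M,γ): if Ξ₁ ⊆ T*M is a reduced polarized part and Ξ₂ ⊆ T*M is a reduced strictly polarized part with the same base finite set projections, and p₁, p₂ ∈ T*Mⁿ have traces Tr(p₁) = Ξ₁ and Tr(p₂) = Ξ₂, then p₁ + p₂ ≠ 0 (the sum of the covector components does not vanish identically). Consequently, for distributions u, v on an open Ω ⊆ Mⁿ with WF(u) polarized and WF(v) strictly polarized, (WF(u) + WF(v)) ∩ T*Ω does not meet the zero section, so the Hörmander product uv exists in D′(Ω). -/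
open MeasureTheory Filter Topology

/-- A test function on `ℝ^ι`: smooth and compactly supported. -/
def IsTest {ι : Type} [Fintype ι] (φ : (ι → ℝ) → ℂ) : Prop :=
  ContDiff ℝ (⊤ : ℕ∞) φ ∧ HasCompactSupport φ

/-- The pairing `T(φ e^{-i⟨·,ξ⟩})`, i.e. the Fourier transform of `φT`. -/
noncomputable def ftPair {ι : Type} [Fintype ι] (T : ((ι → ℝ) → ℂ) → ℂ)
    (φ : (ι → ℝ) → ℂ) (ξ : ι → ℝ) : ℂ :=
  T (fun x => φ x * Complex.exp (-Complex.I * ((∑ i, x i * ξ i : ℝ) : ℂ)))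

/-- `(x₀, ξ₀)` is a regular directed point of `T`. -/
def IsRegularPoint {ι : Type} [Fintype ι] (T : ((ι → ℝ) → ℂ) → ℂ)
    (x₀ ξ₀ : ι → ℝ) : Prop :=
  ∃ φ : (ι → ℝ) → ℂ, IsTest φ ∧ φ x₀ ≠ 0 ∧
    ∃ V : Set (ι → ℝ), IsOpen V ∧ ξ₀ ∈ V ∧ (∀ ξ ∈ V, ∀ t : ℝ, 0 < t → t • ξ ∈ V) ∧
      ∀ N : ℕ, ∃ C : ℝ, ∀ ξ ∈ V, ‖ftPair T φ ξ‖ ≤ C * (1 + ‖ξ‖) ^ (-(N : ℝ))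

/-- The Hörmander wave front set of a distribution `T` on `ℝ^ι`. -/
def wfSet {ι : Type} [Fintype ι] (T : ((ι → ℝ) → ℂ) → ℂ) :
    Set ((ι → ℝ) × (ι → ℝ)) :=
  {p | p.2 ≠ 0 ∧ ¬ IsRegularPoint T p.1 p.2}

section Polarization

variable {d nn : ℕ}

/-- The base points of `p ∈ T*Mⁿ` carrying a nonzero covector component. -/
def baseOf (p : Fin nn → ((Fin d → ℝ) × (Fin d → ℝ))) : Set (Fin d → ℝ) :=
  {a | ∃ i, (p i).1 = a ∧ (p i).2 ≠ 0}

/-- The summed covector of `p` at the base point `a` (value of the trace `Tr(p)`). -/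
noncomputable def fibSum (p : Fin nn → ((Fin d → ℝ) × (Fin d → ℝ)))
    (a : Fin d → ℝ) : Fin d → ℝ :=
  ∑ i ∈ Finset.univ.filter (fun i => (p i).1 = a), (p i).2

/-- `a` is maximal in `A` for the causal preorder `cle`: no `b ∈ A` with `a < b`. -/
def IsMaximalIn (cle : (Fin d → ℝ) → (Fin d → ℝ) → Prop)
    (A : Set (Fin d → ℝ)) (a : Fin d → ℝ) : Prop :=
  a ∈ A ∧ ∀ b ∈ A, ¬ (cle a b ∧ ¬ cle b a)

/-- `p` has a reduced polarized trace: at every maximal base point, the summed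
covector lies in `γ ∪ {0}`. -/
def HasPolarizedTrace (cle : (Fin d → ℝ) → (Fin d → ℝ) → Prop)
    (γ : (Fin d → ℝ) → Set (Fin d → ℝ))
    (p : Fin nn → ((Fin d → ℝ) × (Fin d → ℝ))) : Prop :=
  ∀ a, IsMaximalIn cle (baseOf p) a → fibSum p a ∈ γ a ∪ {0}

/-- `p` has a reduced strictly polarized trace: at every maximal base point, the
summed covector lies in `γ`. -/
def HasStrictPolarizedTrace (cle : (Fin d → ℝ) → (Fin d → ℝ) → Prop)
    (γ : (Fin d → ℝ) → Set (Fin d → ℝ))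
    (p : Fin nn → ((Fin d → ℝ) × (Fin d → ℝ))) : Prop :=
  ∀ a, IsMaximalIn cle (baseOf p) a → fibSum p a ∈ γ a

/-- Split a point of `T*(Mⁿ)` into its `n` components in `T*M`. -/
def toPoints (x ξ : Fin nn × Fin d → ℝ) : Fin nn → ((Fin d → ℝ) × (Fin d → ℝ)) :=
  fun i => (fun j => x (i, j), fun j => ξ (i, j))

/-- A conic subset of `T*(Mⁿ)` is polarized if every element has polarized trace. -/
def IsPolarizedSet (cle : (Fin d → ℝ) → (Fin d → ℝ) → Prop)
    (γ : (Fin d → ℝ) → Set (Fin d → ℝ))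
    (Γ : Set ((Fin nn × Fin d → ℝ) × (Fin nn × Fin d → ℝ))) : Prop :=
  ∀ q ∈ Γ, HasPolarizedTrace cle γ (toPoints q.1 q.2)

/-- A conic subset of `T*(Mⁿ)` is strictly polarized. -/
def IsStrictPolarizedSet (cle : (Fin d → ℝ) → (Fin d → ℝ) → Prop)
    (γ : (Fin d → ℝ) → Set (Fin d → ℝ))
    (Γ : Set ((Fin nn × Fin d → ℝ) × (Fin nn × Fin d → ℝ))) : Prop :=
  ∀ q ∈ Γ, HasStrictPolarizedTrace cle γ (toPoints q.1 q.2)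

end Polarization

/-- A transitive asymmetric relation on a nonempty finset has a maximal element. -/
lemma finset_exists_maximal_rel {α : Type*} (r : α → α → Prop) (htr : Transitive r)
    (hasym : ∀ a b, r a b → ¬ r b a) (s : Finset α) :
    s.Nonempty → ∃ m ∈ s, ∀ b ∈ s, ¬ r m b := by
  classical
  induction s using Finset.induction with
  | empty => intro h; simp at h
  | @insert a s ha ih =>
    intro _
    rcases s.eq_empty_or_nonempty with rfl | hne
    · exact ⟨a, by simp, by simpa using fun h => hasym a a h h⟩
    · obtain ⟨m, hm, hmax⟩ := ih hne
      by_cases hma : r m a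
      · refine ⟨a, Finset.mem_insert_self _ _, ?_⟩
        intro b hb hab
        rcases Finset.mem_insert.mp hb with rfl | hb
        · exact hasym _ _ hab hab
        · exact hmax b hb (htr hma hab)
      · refine ⟨m, Finset.mem_insert_of_mem hm, ?_⟩
        intro b hb
        rcases Finset.mem_insert.mp hb with rfl | hb
        · exact hma
        · exact hmax b hb

/-- **Polarized plus strictly polarized traces cannot cancel.** On a causal manifold
`(M, γ)`: if `p₁` has a reduced polarized trace, `p₂` has a reduced strictly polarized
trace over the same base points (with `Tr(p₂) ≠ ∅`), then `p₁ + p₂ ≠ 0`. Consequently,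
for distributions `u, v` on `Ω ⊆ Mⁿ` with `WF(u)` polarized and `WF(v)` strictly
polarized, `(WF(u) + WF(v)) ∩ T*Ω` does not meet the zero section, so the Hörmander
product `uv` exists in `D′(Ω)`. -/

theorem polarized_traces_no_cancellation {d nn : ℕ}
    (cle : (Fin d → ℝ) → (Fin d → ℝ) → Prop)
    (hrefl : Reflexive cle) (htrans : Transitive cle)
    (γ : (Fin d → ℝ) → Set (Fin d → ℝ))
    (hγ0 : ∀ a, (0 : Fin d → ℝ) ∉ γ a)
    (hγadd : ∀ a, ∀ ξ ∈ γ a, ∀ η ∈ γ a, ξ + η ∈ γ a)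
    (hγcone : ∀ a, ∀ ξ ∈ γ a, ∀ t : ℝ, 0 < t → t • ξ ∈ γ a) :
    (∀ p₁ p₂ : Fin nn → ((Fin d → ℝ) × (Fin d → ℝ)),
      (∀ i, (p₁ i).1 = (p₂ i).1) →
      HasPolarizedTrace cle γ p₁ → HasStrictPolarizedTrace cle γ p₂ →
      (∃ i, (p₂ i).2 ≠ 0) →
      ∃ i, (p₁ i).2 + (p₂ i).2 ≠ 0) ∧
    (∀ (Ω : Set (Fin nn × Fin d → ℝ)) (u v : ((Fin nn × Fin d → ℝ) → ℂ) → ℂ),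
      IsPolarizedSet cle γ {q ∈ wfSet u | q.1 ∈ Ω} →
      IsStrictPolarizedSet cle γ {q ∈ wfSet v | q.1 ∈ Ω} →
      ∀ q₁ ∈ wfSet u, ∀ q₂ ∈ wfSet v,
        q₁.1 ∈ Ω → q₁.1 = q₂.1 → q₁.2 + q₂.2 ≠ 0) := by
  classical
  have main : ∀ p₁ p₂ : Fin nn → ((Fin d → ℝ) × (Fin d → ℝ)),
      (∀ i, (p₁ i).1 = (p₂ i).1) →
      HasPolarizedTrace cle γ p₁ → HasStrictPolarizedTrace cle γ p₂ →
      (∃ i, (p₂ i).2 ≠ 0) →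
      ∃ i, (p₁ i).2 + (p₂ i).2 ≠ 0 := by
    intro p₁ p₂ hbase hpol hspol hex
    by_contra h
    push_neg at h
    have hneg : ∀ i, (p₁ i).2 = -(p₂ i).2 := fun i =>
      eq_neg_of_add_eq_zero_left (h i)
    have hB : baseOf p₁ = baseOf p₂ := by
      ext a
      constructor <;> rintro ⟨i, hi1, hi2⟩
      · exact ⟨i, (hbase i) ▸ hi1, by
          intro h0; apply hi2; rw [hneg i, h0, neg_zero]⟩
      · exact ⟨i, (hbase i) ▸ hi1, by
          intro h0; apply hi2; rw [hneg i] at h0; exact neg_eq_zero.mp h0⟩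
    -- the base of p₂ as a finset
    set S : Finset (Fin d → ℝ) :=
      (Finset.univ.filter (fun i => (p₂ i).2 ≠ 0)).image (fun i => (p₂ i).1) with hS
    have hSmem : ∀ a, a ∈ S ↔ a ∈ baseOf p₂ := by
      intro a
      simp only [hS, Finset.mem_image, Finset.mem_filter, Finset.mem_univ, true_and]
      constructor
      · rintro ⟨i, hi, rfl⟩; exact ⟨i, rfl, hi⟩
      · rintro ⟨i, rfl, hi⟩; exact ⟨i, hi, rfl⟩
    obtain ⟨i₀, hi₀⟩ := hex
    have hSne : S.Nonempty := ⟨(p₂ i₀).1, (hSmem _).mpr ⟨i₀, rfl, hi₀⟩⟩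
    -- the strict part of the causal preorder
    set r : (Fin d → ℝ) → (Fin d → ℝ) → Prop := fun a b => cle a b ∧ ¬ cle b a with hr
    have htr : Transitive r := by
      rintro a b c ⟨hab, hnba⟩ ⟨hbc, hncb⟩
      exact ⟨htrans hab hbc, fun hca => hncb (htrans hca hab)⟩
    have hasym : ∀ a b, r a b → ¬ r b a := by
      rintro a b ⟨hab, hnba⟩ ⟨hba, _⟩; exact hnba hba
    obtain ⟨m, hm, hmax⟩ := finset_exists_maximal_rel r htr hasym S hSne
    have hmax₂ : IsMaximalIn cle (baseOf p₂) m :=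
      ⟨(hSmem m).mp hm, fun b hb => hmax b ((hSmem b).mpr hb)⟩
    have hmax₁ : IsMaximalIn cle (baseOf p₁) m := hB ▸ hmax₂
    have h2 : fibSum p₂ m ∈ γ m := hspol m hmax₂
    have h1 : fibSum p₁ m ∈ γ m ∪ {0} := hpol m hmax₁
    have hfilter : (Finset.univ.filter (fun i => (p₁ i).1 = m)) =
        (Finset.univ.filter (fun i => (p₂ i).1 = m)) := by
      apply Finset.filter_congr; intro i _; rw [hbase i]
    have hsum : fibSum p₁ m = -(fibSum p₂ m) := by
      unfold fibSum
      rw [hfilter, ← Finset.sum_neg_distrib]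
      exact Finset.sum_congr rfl fun i _ => hneg i
    rcases h1 with h1 | h1
    · exact hγ0 m (by
        have := hγadd m _ h1 _ h2
        rwa [hsum, neg_add_cancel] at this)
    · apply hγ0 m
      have : fibSum p₂ m = 0 := by
        have h0 : fibSum p₁ m = 0 := h1
        rw [hsum] at h0; exact neg_eq_zero.mp h0
      rwa [this] at h2
  refine ⟨main, ?_⟩
  intro Ω u v hPu hPv q₁ hq₁ q₂ hq₂ hΩ heq hsum0
  have hpol := hPu q₁ ⟨hq₁, hΩ⟩
  have hspol := hPv q₂ ⟨hq₂, heq ▸ hΩ⟩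
  have hbase : ∀ i, (toPoints q₁.1 q₁.2 i).1 = (toPoints q₂.1 q₂.2 i).1 := by
    intro i; simp only [toPoints, heq]
  have hex : ∃ i, (toPoints q₂.1 q₂.2 i).2 ≠ 0 := by
    have hne : q₂.2 ≠ 0 := hq₂.1
    obtain ⟨⟨i, j⟩, hij⟩ := Function.ne_iff.mp hne
    exact ⟨i, fun h0 => hij (congrFun h0 j)⟩
  obtain ⟨i, hi⟩ := main _ _ hbase hpol hspol hex
  apply hi
  funext j
  have := congrFun hsum0 (i, j)
  simpa [toPoints] using this
end

section
/- Covering lemma (Popineau–Stora): Let M be a smooth manifold with a metric d (or any metrizable topology) and n ≥ 2. For each proper nonempty subset I ⊊ {1,…,n}, let C_I = {(x₁,…,xₙ) ∈ Mⁿ : xᵢ ≠ xⱼ for all i ∈ I, j ∉ I}. Then ⋃_{∅≠I⊊{1,…,n}} C_I = Mⁿ ∖ dₙ, where dₙ = {(x,…,x)} is the small diagonal. Moreover, each point of Mⁿ∖dₙ lies in some C_I of the stronger form U^I × V^J with U, V open and disjoint closures, J = {1,…,n}∖I. -/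
/-!
Pick a coordinate value `a = x i` that is not taken by every coordinate. Finitely many values
differ from `a`, so they all stay at distance at least some `ε > 0` from it. Splitting the
indices into `I = {k | x k = a}` and its complement, the coordinates indexed by `I` lie in
the ball of radius `ε / 3` around `a` and the others outside the closed ball of radius
`ε / 2`, two open sets with disjoint closures.
-/

open Metric

section

variable {M : Type*} [MetricSpace M]

theorem disjoint_closure_ball_closure_compl_closedBall (a : M) {r s : ℝ} (hrs : r < s) :
    Disjoint (closure (ball a r)) (closure (closedBall a s)ᶜ) := by
  rw [closure_compl]
  exact (disjoint_compl_right.mono_left (closedBall_subset_ball hrs)).mono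
    closure_ball_subset_closedBall (Set.compl_subset_compl.mpr ball_subset_interior_closedBall)

theorem exists_pos_le_dist_of_ne {ι : Type*} [Finite ι] (x : ι → M) (a : M) :
    ∃ ε > 0, ∀ k, x k ≠ a → ε ≤ dist (x k) a := by
  have hopen : IsOpen (Set.range x \ {a})ᶜ :=
    ((Set.finite_range x).sdiff.isClosed).isOpen_compl
  obtain ⟨ε, hε, hball⟩ := isOpen_iff.mp hopen a (by simp)
  refine ⟨ε, hε, fun k hk => not_lt.mp fun hlt => hball (mem_ball.mpr hlt) ?_⟩
  exact ⟨Set.mem_range_self k, hk⟩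

theorem exists_finset_separated_by_open_of_ne {ι : Type*} [Fintype ι] (x : ι → M) {i j : ι}
    (hij : x i ≠ x j) :
    ∃ (I : Finset ι) (U V : Set M), i ∈ I ∧ j ∉ I ∧
      IsOpen U ∧ IsOpen V ∧ Disjoint (closure U) (closure V) ∧
      (∀ k ∈ I, x k ∈ U) ∧ (∀ k ∉ I, x k ∈ V) := by
  classical
  obtain ⟨ε, hε, hfar⟩ := exists_pos_le_dist_of_ne x (x i)
  refine ⟨Finset.univ.filter (x · = x i), ball (x i) (ε / 3), (closedBall (x i) (ε / 2))ᶜ,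
    by simp, by simpa using hij.symm, isOpen_ball, isClosed_closedBall.isOpen_compl,
    disjoint_closure_ball_closure_compl_closedBall _ (by linarith), ?_, ?_⟩
  · intro k hk
    rw [(Finset.mem_filter.mp hk).2]
    exact mem_ball_self (by positivity)
  · intro k hk
    have := hfar k (by simpa using hk)
    simp only [Set.mem_compl_iff, mem_closedBall, not_le]
    linarith

theorem exists_nontrivial_finset_separated_by_open {ι : Type*} [Fintype ι] (x : ι → M)
    (hx : ¬ ∀ i j, x i = x j) :
    ∃ (I : Finset ι) (U V : Set M), I.Nonempty ∧ I ≠ Finset.univ ∧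
      IsOpen U ∧ IsOpen V ∧ Disjoint (closure U) (closure V) ∧
      (∀ k ∈ I, x k ∈ U) ∧ (∀ k ∉ I, x k ∈ V) := by
  obtain ⟨i, j, hij⟩ : ∃ i j, x i ≠ x j := by simpa only [not_forall] using hx
  obtain ⟨I, U, V, hi, hj, hU, hV, hdisj, hxU, hxV⟩ := exists_finset_separated_by_open_of_ne x hij
  exact ⟨I, U, V, ⟨i, hi⟩, fun h => hj (h ▸ Finset.mem_univ j), hU, hV, hdisj, hxU, hxV⟩

end

theorem not_forall_eq_of_finset_separated {ι α : Type*} [Fintype ι] {x : ι → α}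
    {I : Finset ι} (hI : I.Nonempty) (hIu : I ≠ Finset.univ)
    (hsep : ∀ i ∈ I, ∀ j ∉ I, x i ≠ x j) : ¬ ∀ i j, x i = x j := by
  obtain ⟨i, hi⟩ := hI
  obtain ⟨j, hj⟩ : ∃ j, j ∉ I := by simpa [Finset.eq_univ_iff_forall] using hIu
  exact fun hconst => hsep i hi j hj (hconst i j)

theorem popineau_stora_covering_general {n : ℕ}
    (M : Type) [MetricSpace M] :
    ({x : Fin n → M | ∃ I : Finset (Fin n), I.Nonempty ∧ I ≠ Finset.univ ∧
        ∀ i ∈ I, ∀ j ∉ I, x i ≠ x j}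
      = {x : Fin n → M | ¬ ∀ i j : Fin n, x i = x j}) ∧
    (∀ x : Fin n → M, (¬ ∀ i j : Fin n, x i = x j) →
      ∃ (I : Finset (Fin n)) (U V : Set M), I.Nonempty ∧ I ≠ Finset.univ ∧
        IsOpen U ∧ IsOpen V ∧ Disjoint (closure U) (closure V) ∧
        (∀ i ∈ I, x i ∈ U) ∧ (∀ j ∉ I, x j ∈ V)) := by
  refine ⟨Set.ext fun x => ⟨fun ⟨I, hI, hIu, hsep⟩ =>
    not_forall_eq_of_finset_separated hI hIu hsep, fun hx => ?_⟩,
    exists_nontrivial_finset_separated_by_open⟩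
  obtain ⟨I, U, V, hI, hIu, -, -, hdisj, hxU, hxV⟩ :=
    exists_nontrivial_finset_separated_by_open x hx
  exact ⟨I, hI, hIu, fun i hi j hj =>
    hdisj.ne_of_mem (subset_closure (hxU i hi)) (subset_closure (hxV j hj))⟩

/-- **Covering lemma of Popineau–Stora.** Let `M` be a metric space and `n ≥ 2`. For
each proper nonempty `I ⊊ {1,…,n}`, let `C_I = {x ∈ Mⁿ : xᵢ ≠ xⱼ ∀ i ∈ I, j ∉ I}`.
Then `⋃_I C_I = Mⁿ ∖ dₙ` where `dₙ` is the small diagonal; moreover each point of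
`Mⁿ ∖ dₙ` lies in a set `U^I × V^J ⊆ C_I` with `U, V` open with disjoint closures. -/
theorem popineau_stora_covering {n : ℕ} (hn : 2 ≤ n)
    (M : Type) [MetricSpace M] :
    ({x : Fin n → M | ∃ I : Finset (Fin n), I.Nonempty ∧ I ≠ Finset.univ ∧
        ∀ i ∈ I, ∀ j ∉ I, x i ≠ x j}
      = {x : Fin n → M | ¬ ∀ i j : Fin n, x i = x j}) ∧
    (∀ x : Fin n → M, (¬ ∀ i j : Fin n, x i = x j) →
      ∃ (I : Finset (Fin n)) (U V : Set M), I.Nonempty ∧ I ≠ Finset.univ ∧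
        IsOpen U ∧ IsOpen V ∧ Disjoint (closure U) (closure V) ∧
        (∀ i ∈ I, x i ∈ U) ∧ (∀ j ∉ I, x j ∈ V)) :=
  popineau_stora_covering_general M
end
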